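/- For all k ≥ 1, t(2^(2k) − 2) = 2^k − 1; for all k ≥ 0, t(2^(2k+1) − 2) = 1 and t(3·2^k − 1) = 2^⌊(k+1)/2⌋. -/

import Mathlib

def rs : ℕ → ℤ
  | 0 => 1
  | (n+1) =>
    if (n+1) % 2 = 0 then rs ((n+1)/2)
    else (-1)^((n+1)/2) * rs ((n+1)/2)
decreasing_by all_goals exact Nat.div_lt_self (Nat.succ_pos n) (by norm_num)

def s (n : ℕ) : ℤ := ∑ i ∈ Finset.range (n+1), rs i

def t (n : ℕ) : ℤ := ∑ i ∈ Finset.range (n+1), (-1)^i * rs i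

/-!
Write `s n = ∑_{i ≤ n} a(i)`. Splitting the sums up to `2n+1` into even and odd indices gives
`s(2n+1) = s n + t n` and `t(2n+1) = s n - t n`, so `(s, t)` at `2n+1` is obtained from `(s, t)`
at `n` by the map `(x, y) ↦ (x + y, x - y)`, whose square is multiplication by `2`.
Since `3·2^(k+1) - 1 = 2(3·2^k - 1) + 1` and `2^(m+2) - 2 = 2(2^(m+1) - 2) + 2`, with the
correction term `a(2^(m+1) - 1) = (-1)^m` in the second case, all three values follow by
induction on `k`.
-/

lemma rs_two_mul (n : ℕ) : rs (2 * n) = rs n := by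
  cases n with
  | zero => rfl
  | succ m =>
    rw [show 2 * (m + 1) = 2 * m + 1 + 1 by ring, rs]
    simp only [show (2 * m + 1 + 1) % 2 = 0 by omega, show (2 * m + 1 + 1) / 2 = m + 1 by omega,
      if_true]

lemma rs_two_mul_add_one (n : ℕ) : rs (2 * n + 1) = (-1) ^ n * rs n := by
  rw [rs, if_neg (by omega), show (2 * n + 1) / 2 = n by omega]

lemma rs_two_pow_sub_one (m : ℕ) : rs (2 ^ (m + 1) - 1) = (-1) ^ m := by
  induction m with
  | zero => simp [rs]
  | succ m ih =>
    have hpos : 1 ≤ 2 ^ (m + 1) := Nat.one_le_two_pow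
    have hodd : Odd (2 ^ (m + 1) - 1) :=
      Nat.Even.sub_odd hpos (Nat.even_pow.2 ⟨even_two, by omega⟩) odd_one
    rw [show 2 ^ (m + 1 + 1) - 1 = 2 * (2 ^ (m + 1) - 1) + 1 by rw [pow_succ 2 (m + 1)]; omega,
      rs_two_mul_add_one, ih, hodd.neg_one_pow, pow_succ']

lemma sum_range_two_mul {M : Type*} [AddCommMonoid M] (f : ℕ → M) (n : ℕ) :
    ∑ i ∈ Finset.range (2 * n), f i = ∑ i ∈ Finset.range n, (f (2 * i) + f (2 * i + 1)) := by
  induction n with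
  | zero => simp
  | succ n ih =>
    rw [Finset.sum_range_succ, ← ih, Nat.mul_succ, Finset.sum_range_succ, Finset.sum_range_succ,
      add_assoc]

lemma s_two_mul_add_one (n : ℕ) : s (2 * n + 1) = s n + t n := by
  rw [s, show 2 * n + 1 + 1 = 2 * (n + 1) by ring, sum_range_two_mul, Finset.sum_add_distrib]
  simp only [rs_two_mul, rs_two_mul_add_one]
  rfl

lemma t_two_mul_add_one (n : ℕ) : t (2 * n + 1) = s n - t n := by
  rw [t, show 2 * n + 1 + 1 = 2 * (n + 1) by ring, sum_range_two_mul, s, t,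
    ← Finset.sum_sub_distrib]
  refine Finset.sum_congr rfl fun i _ => ?_
  rw [rs_two_mul, rs_two_mul_add_one, pow_succ, pow_mul]
  ring

lemma s_two_mul_add_two (n : ℕ) : s (2 * n + 2) = s n + t n + rs (n + 1) := by
  rw [s, Finset.sum_range_succ, ← s, s_two_mul_add_one, show 2 * n + 2 = 2 * (n + 1) by ring,
    rs_two_mul]

lemma t_two_mul_add_two (n : ℕ) : t (2 * n + 2) = s n - t n + rs (n + 1) := by
  rw [t, Finset.sum_range_succ, ← t, t_two_mul_add_one, show 2 * n + 2 = 2 * (n + 1) by ring,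
    rs_two_mul, pow_mul]
  simp

lemma s_t_three_mul_two_pow_sub_one (k : ℕ) :
    s (3 * 2 ^ k - 1) = 2 ^ ((k + 1) / 2) + 2 * 2 ^ (k / 2) ∧ t (3 * 2 ^ k - 1) = 2 ^ ((k + 1) / 2) := by
  induction k with
  | zero => constructor <;> simp [s, t, Finset.sum_range_succ, rs]
  | succ k ih =>
    have hk : 3 * 2 ^ (k + 1) - 1 = 2 * (3 * 2 ^ k - 1) + 1 := by
      have : 1 ≤ 2 ^ k := Nat.one_le_two_pow
      rw [pow_succ]; omega
    rw [hk, s_two_mul_add_one, t_two_mul_add_one, ih.1, ih.2,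
      show (k + 1 + 1) / 2 = k / 2 + 1 by omega, pow_succ]
    constructor <;> ring

lemma s_t_two_pow_succ_succ_sub_two (m : ℕ) :
    s (2 ^ (m + 2) - 2) = s (2 ^ (m + 1) - 2) + t (2 ^ (m + 1) - 2) + (-1) ^ m ∧
    t (2 ^ (m + 2) - 2) = s (2 ^ (m + 1) - 2) - t (2 ^ (m + 1) - 2) + (-1) ^ m := by
  have h2 : 2 ≤ 2 ^ (m + 1) := Nat.le_self_pow (by omega) 2
  have hdouble : 2 ^ (m + 2) - 2 = 2 * (2 ^ (m + 1) - 2) + 2 := by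
    rw [pow_succ 2 (m + 1)]; omega
  have hrs : rs (2 ^ (m + 1) - 2 + 1) = (-1) ^ m := by
    rw [show 2 ^ (m + 1) - 2 + 1 = 2 ^ (m + 1) - 1 by omega, rs_two_pow_sub_one]
  rw [hdouble, s_two_mul_add_two, t_two_mul_add_two, hrs]
  exact ⟨rfl, rfl⟩

lemma s_t_two_pow_two_mul_add_two_sub_two {k : ℕ}
    (hs : s (2 ^ (2 * k + 1) - 2) = 2 ^ (k + 1) - 1) (ht : t (2 ^ (2 * k + 1) - 2) = 1) :
    s (2 ^ (2 * k + 2) - 2) = 2 ^ (k + 1) + 1 ∧ t (2 ^ (2 * k + 2) - 2) = 2 ^ (k + 1) - 1 := by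
  obtain ⟨hs', ht'⟩ := s_t_two_pow_succ_succ_sub_two (2 * k)
  rw [hs', ht', hs, ht, (even_two_mul k).neg_one_pow]
  constructor <;> ring

lemma s_t_two_pow_two_mul_add_one_sub_two (k : ℕ) :
    s (2 ^ (2 * k + 1) - 2) = 2 ^ (k + 1) - 1 ∧ t (2 ^ (2 * k + 1) - 2) = 1 := by
  induction k with
  | zero => simp [s, t, rs]
  | succ k ih =>
    obtain ⟨hs, ht⟩ := s_t_two_pow_two_mul_add_two_sub_two ih.1 ih.2
    obtain ⟨hs', ht'⟩ := s_t_two_pow_succ_succ_sub_two (2 * k + 1)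
    rw [show 2 * (k + 1) + 1 = 2 * k + 1 + 2 by ring, hs', ht',
      show 2 * k + 1 + 1 = 2 * k + 2 from rfl, hs, ht, (odd_two_mul_add_one k).neg_one_pow]
    constructor <;> ring

theorem stmt16 : (∀ k : ℕ, 1 ≤ k → t (2^(2*k) - 2) = 2^k - 1) ∧
    (∀ k : ℕ, t (2^(2*k+1) - 2) = 1) ∧
    (∀ k : ℕ, t (3 * 2^k - 1) = 2^((k+1)/2)) := by
  refine ⟨fun k hk => ?_, fun k => (s_t_two_pow_two_mul_add_one_sub_two k).2,
    fun k => (s_t_three_mul_two_pow_sub_one k).2⟩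
  obtain ⟨j, rfl⟩ := Nat.exists_eq_add_of_le' hk
  obtain ⟨hs, ht⟩ := s_t_two_pow_two_mul_add_one_sub_two j
  rw [mul_add, mul_one]
  exact (s_t_two_pow_two_mul_add_two_sub_two hs ht).2
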